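/- arXiv:1706.08608 — 2 statements merged into one kernel-verified Lean document; each statement's English description precedes it below -/
import Mathlib

section
/- Witness shifting in neutral loops: if σ(j) = σ(j + p) for all j in [a, b] (periodicity with period p on a region), bal_φ of one full period is 0, ψ holds at position i_3 with a ≤ i_3 ≤ b, and bal_φ(σ[i .. i_3 − 1]) ≥ 0 for some i ≤ i_3 with i_3 − p ≥ i, then ψ also holds at i_3 − p and bal_φ(σ[i .. i_3 − p − 1]) ≥ 0 provided i_3 − p ≥ a. -/
def balSeg (x y : ℕ) (σ : ℕ → Bool) (a b : ℕ) : ℤ :=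
  (y : ℤ) * (((Finset.Ico a b).filter (fun j => σ j = true)).card : ℤ)
    - (x : ℤ) * ((b - a : ℕ) : ℤ)

lemma balSeg_add (x y : ℕ) (σ : ℕ → Bool) (a b c : ℕ) (hab : a ≤ b) (hbc : b ≤ c) :
    balSeg x y σ a c = balSeg x y σ a b + balSeg x y σ b c := by
  unfold balSeg
  rw [← Finset.Ico_union_Ico_eq_Ico hab hbc, Finset.filter_union,
    Finset.card_union_of_disjoint]
  · push_cast [Nat.sub_add_comm]
    have h1 : ((c - a : ℕ) : ℤ) = ((b - a : ℕ) : ℤ) + ((c - b : ℕ) : ℤ) := by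
      omega
    rw [h1]; ring
  · exact Finset.disjoint_filter_filter (Finset.Ico_disjoint_Ico_consecutive a b c)

theorem stmt13 (x y : ℕ) (hxy : x ≤ y) (hy : 0 < y)
    (σ : ℕ → Bool × Bool) (p a b i i3 : ℕ) (hp : 0 < p)
    (hper : ∀ j, a ≤ j → j ≤ b → σ (j + p) = σ j)
    (hzero : ∀ j, a ≤ j → j ≤ b → balSeg x y (fun k => (σ k).1) j (j + p) = 0)
    (hψ : (σ i3).2 = true) (ha3 : a ≤ i3) (hb3 : i3 ≤ b)
    (hi : i ≤ i3) (hip : i + p ≤ i3) (hasub : a ≤ i3 - p)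
    (hbal : 0 ≤ balSeg x y (fun k => (σ k).1) i i3) :
    (σ (i3 - p)).2 = true ∧ 0 ≤ balSeg x y (fun k => (σ k).1) i (i3 - p) := by
  have hsub : i3 - p + p = i3 := by omega
  have hsb : i3 - p ≤ b := by omega
  have hσ : σ (i3 - p) = σ i3 := by
    rw [← hper (i3 - p) hasub hsb, hsub]
  have hz := hzero (i3 - p) hasub hsb
  rw [hsub] at hz
  have hadd := balSeg_add x y (fun k => (σ k).1) i (i3 - p) i3 (by omega) (by omega)
  constructor
  · rw [hσ]; exact hψ
  · rw [hadd, hz, add_zero] at hbal; exact hbal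
end

section
/- Stabilization of frequency-until along loop iterations (Decomposition Lemma): Let σ = u v^n w be an infinite labelled word with v a finite block of length p > 0, labelled by subsets of {φ, ψ}, and let n̂ = p·y. If n ≥ n̂ + 2, then there exist n_1, n_2 ≥ 0 with n_1 + n̂ + n_2 = n such that for all positions i with |u| ≤ i < |u v^{n_1 − 1}| or |u v^{n_1} v^{n̂}| ≤ i < |u v^{n_1} v^{n̂} v^{n_2 − 2}|, the frequency-until φ U^{x/y} ψ holds at i on σ if and only if it holds at i + p. -/
/-- The frequency until `φ U^{x/y} ψ` holds at position `i` of `σ`. -/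
def FreqUntil (x y : ℕ) (σ : ℕ → Bool × Bool) (i : ℕ) : Prop :=
  ∃ k, i ≤ k ∧ (σ k).2 = true ∧ 0 ≤ balSeg x y (fun j => (σ j).1) i k

lemma balSeg_self (x y : ℕ) (σ : ℕ → Bool) (a : ℕ) : balSeg x y σ a a = 0 := by
  simp [balSeg]

lemma balSeg_split (x y : ℕ) (σ : ℕ → Bool) {a b c : ℕ} (hab : a ≤ b) (hbc : b ≤ c) :
    balSeg x y σ a c = balSeg x y σ a b + balSeg x y σ b c := by
  unfold balSeg
  rw [← Finset.Ico_union_Ico_eq_Ico hab hbc, Finset.filter_union,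
    Finset.card_union_of_disjoint
      ((Finset.Ico_disjoint_Ico_consecutive a b c).mono (Finset.filter_subset _ _)
        (Finset.filter_subset _ _))]
  have h : c - a = (b - a) + (c - b) := by omega
  rw [h]; push_cast; ring

lemma balSeg_shift (x y p : ℕ) (σ : ℕ → Bool) {a b : ℕ}
    (h : ∀ j, a ≤ j → j < b → σ (j + p) = σ j) :
    balSeg x y σ (a + p) (b + p) = balSeg x y σ a b := by
  unfold balSeg
  have hlen : b + p - (a + p) = b - a := by omega
  have himg : Finset.Ico (a + p) (b + p) = (Finset.Ico a b).image (· + p) := by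
    ext j
    simp only [Finset.mem_Ico, Finset.mem_image]
    constructor
    · rintro ⟨h1, h2⟩; exact ⟨j - p, by omega, by omega⟩
    · rintro ⟨m, ⟨h1, h2⟩, rfl⟩; omega
  have hcard : ((Finset.Ico (a + p) (b + p)).filter (fun j => σ j = true)).card
      = ((Finset.Ico a b).filter (fun j => σ j = true)).card := by
    rw [himg, Finset.filter_image, Finset.card_image_of_injective _ (add_left_injective p)]
    congr 1
    apply Finset.filter_congr
    intro j hj
    simp only [Finset.mem_Ico] at hj
    rw [h j hj.1 hj.2]
  rw [hlen, hcard]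

lemma balSeg_lower (x y : ℕ) (σ : ℕ → Bool) (a b : ℕ) :
    -((x : ℤ) * ((b - a : ℕ) : ℤ)) ≤ balSeg x y σ a b := by
  unfold balSeg
  have : (0 : ℤ) ≤ (y : ℤ) * (((Finset.Ico a b).filter (fun j => σ j = true)).card : ℤ) := by
    positivity
  linarith

lemma balSeg_upper (x y : ℕ) (σ : ℕ → Bool) (a b : ℕ) :
    balSeg x y σ a b ≤ ((y : ℤ) - x) * ((b - a : ℕ) : ℤ) := by
  unfold balSeg
  have hc : (((Finset.Ico a b).filter (fun j => σ j = true)).card : ℤ) ≤ ((b - a : ℕ) : ℤ) := by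
    have h1 := Finset.card_filter_le (Finset.Ico a b) (fun j => σ j = true)
    have h2 : (Finset.Ico a b).card = b - a := Nat.card_Ico a b
    exact_mod_cast h2 ▸ h1
  nlinarith [hc, Int.ofNat_nonneg y, Int.ofNat_nonneg (b - a), Int.ofNat_nonneg x,
    Int.ofNat_nonneg (((Finset.Ico a b).filter (fun j => σ j = true)).card)]

theorem stmt14 (x y : ℕ) (hxy : x ≤ y) (hy : 0 < y)
    (σ : ℕ → Bool × Bool) (a p n : ℕ) (hp : 0 < p)
    (hper : ∀ j, a ≤ j → j + p < a + n * p → σ (j + p) = σ j)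
    (hn : p * y + 2 ≤ n) :
    ∃ n1 n2 : ℕ, n1 + p * y + n2 = n ∧
      ∀ i : ℕ,
        ((a ≤ i ∧ i < a + (n1 - 1) * p) ∨
         (a + (n1 + p * y) * p ≤ i ∧ i < a + (n1 + p * y + (n2 - 2)) * p)) →
        (FreqUntil x y σ i ↔ FreqUntil x y σ (i + p)) := by
  classical
  set φ : ℕ → Bool := fun j => (σ j).1 with hφ
  set M : ℕ := a + n * p with hM
  have hφper : ∀ j, a ≤ j → j + p < M → φ (j + p) = φ j := by
    intro j h1 h2; simp only [hφ]; rw [hper j h1 h2]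
  have hψper : ∀ j, a ≤ j → j + p < M → (σ (j + p)).2 = (σ j).2 := by
    intro j h1 h2; rw [hper j h1 h2]
  set B : ℤ := balSeg x y φ a (a + p) with hB
  have hpM : a + p ≤ M := by
    have : p ≤ n * p := Nat.le_mul_of_pos_left p (by omega)
    omega
  -- any length-p window inside the loop has balance B
  have window : ∀ m, a ≤ m → m + p ≤ M → balSeg x y φ m (m + p) = B := by
    intro m hm hmp
    have h1 : balSeg x y φ a (m + p) = balSeg x y φ a m + balSeg x y φ m (m + p) :=
      balSeg_split x y φ hm (by omega)
    have h2 : balSeg x y φ a (m + p) = balSeg x y φ a (a + p) + balSeg x y φ (a + p) (m + p) :=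
      balSeg_split x y φ (by omega) (by omega)
    have h3 : balSeg x y φ (a + p) (m + p) = balSeg x y φ a m :=
      balSeg_shift x y p φ (fun j hj1 hj2 => hφper j hj1 (by omega))
    rw [hB]; linarith
  have multiwindow : ∀ q m, a ≤ m → m + q * p ≤ M → balSeg x y φ m (m + q * p) = q * B := by
    intro q
    induction q with
    | zero => intro m _ _; simpa using balSeg_self x y φ m
    | succ q ih =>
      intro m hm hle
      have he : m + (q + 1) * p = m + q * p + p := by ring
      have hle' : m + q * p + p ≤ M := by rw [← he]; exact hle
      have h1 : balSeg x y φ m (m + q * p + p)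
          = balSeg x y φ m (m + q * p) + balSeg x y φ (m + q * p) (m + q * p + p) :=
        balSeg_split x y φ (by omega) (by omega)
      rw [he, h1, ih m hm (by omega), window (m + q * p) (by omega) hle']
      push_cast; ring
  have hppy : p ≤ p * y := Nat.le_mul_of_pos_right p hy
  have hpy1 : 1 ≤ p * y := by
    have := Nat.mul_pos hp hy; omega
  -- Claim B : if B ≥ 1 then balance over a distance ≥ (p*y-1)*p is nonnegative
  have claimB : 1 ≤ B → ∀ i' d : ℕ, a ≤ i' → (p * y - 1) * p ≤ d → i' + d ≤ M →
      0 ≤ balSeg x y φ i' (i' + d) := by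
    intro hB1 i' d hi' hd hiM
    obtain ⟨q, r, hqr, hrp⟩ : ∃ q r, d = q * p + r ∧ r < p :=
      ⟨d / p, d % p, (Nat.div_add_mod' d p).symm, Nat.mod_lt _ hp⟩
    have hq1 : p * y ≤ q + 1 := by
      by_contra hcon
      push_neg at hcon
      have h2 : q + 1 ≤ p * y - 1 := by omega
      have h3 : (q + 1) * p ≤ (p * y - 1) * p := Nat.mul_le_mul_right p h2
      have h4 : (q + 1) * p = q * p + p := by ring
      have h5 : (p * y - 1) * p ≤ q * p + r := by rw [← hqr]; exact hd
      have : q * p + p ≤ q * p + r := by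
        calc q * p + p = (q + 1) * p := h4.symm
          _ ≤ (p * y - 1) * p := h3
          _ ≤ q * p + r := h5
      omega
    have hqpd : q * p ≤ d := by rw [hqr]; exact Nat.le_add_right _ _
    have hsplit : balSeg x y φ i' (i' + d)
        = balSeg x y φ i' (i' + q * p) + balSeg x y φ (i' + q * p) (i' + d) :=
      balSeg_split x y φ (Nat.le_add_right _ _) (by
        have := hqpd; omega)
    have hmw : balSeg x y φ i' (i' + q * p) = q * B :=
      multiwindow q i' hi' (by have := hqpd; omega)
    have hrr : (i' + d) - (i' + q * p) = r := by
      have h6 : i' + d = (i' + q * p) + r := by rw [hqr]; ring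
      rw [h6, Nat.add_sub_cancel_left]
    have hlow := balSeg_lower x y φ (i' + q * p) (i' + d)
    rw [hrr] at hlow
    rw [hsplit, hmw]
    have hq1' : (p : ℤ) * y ≤ (q : ℤ) + 1 := by exact_mod_cast hq1
    have hrp' : (r : ℤ) + 1 ≤ (p : ℤ) := by exact_mod_cast hrp
    have hxy' : (x : ℤ) ≤ y := by exact_mod_cast hxy
    have hy' : (1 : ℤ) ≤ y := by exact_mod_cast hy
    have hq0 : (0 : ℤ) ≤ q := by positivity
    have hx0 : (0 : ℤ) ≤ x := by positivity
    have k1 : (x : ℤ) * r ≤ y * ((p : ℤ) - 1) :=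
      mul_le_mul hxy' (by linarith) (by positivity) (by positivity)
    have k2 : (y : ℤ) * ((p : ℤ) - 1) ≤ q := by ring_nf; ring_nf at hq1'; linarith
    have k3 : (q : ℤ) ≤ q * B := le_mul_of_one_le_right hq0 hB1
    linarith
  -- Claim B' : if B ≤ -1 then balance over a distance ≥ (p*y-1)*p is nonpositive
  have claimB' : B ≤ -1 → ∀ i' d : ℕ, a ≤ i' → (p * y - 1) * p ≤ d → i' + d ≤ M →
      balSeg x y φ i' (i' + d) ≤ 0 := by
    intro hB1 i' d hi' hd hiM
    obtain ⟨q, r, hqr, hrp⟩ : ∃ q r, d = q * p + r ∧ r < p :=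
      ⟨d / p, d % p, (Nat.div_add_mod' d p).symm, Nat.mod_lt _ hp⟩
    have hq1 : p * y ≤ q + 1 := by
      by_contra hcon
      push_neg at hcon
      have h2 : q + 1 ≤ p * y - 1 := by omega
      have h3 : (q + 1) * p ≤ (p * y - 1) * p := Nat.mul_le_mul_right p h2
      have h4 : (q + 1) * p = q * p + p := by ring
      have h5 : (p * y - 1) * p ≤ q * p + r := by rw [← hqr]; exact hd
      have : q * p + p ≤ q * p + r := by
        calc q * p + p = (q + 1) * p := h4.symm
          _ ≤ (p * y - 1) * p := h3
          _ ≤ q * p + r := h5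
      omega
    have hqpd : q * p ≤ d := by rw [hqr]; exact Nat.le_add_right _ _
    have hsplit : balSeg x y φ i' (i' + d)
        = balSeg x y φ i' (i' + q * p) + balSeg x y φ (i' + q * p) (i' + d) :=
      balSeg_split x y φ (Nat.le_add_right _ _) (by have := hqpd; omega)
    have hmw : balSeg x y φ i' (i' + q * p) = q * B :=
      multiwindow q i' hi' (by have := hqpd; omega)
    have hrr : (i' + d) - (i' + q * p) = r := by
      have h6 : i' + d = (i' + q * p) + r := by rw [hqr]; ring
      rw [h6, Nat.add_sub_cancel_left]
    have hup := balSeg_upper x y φ (i' + q * p) (i' + d)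
    rw [hrr] at hup
    rw [hsplit, hmw]
    have hq1' : (p : ℤ) * y ≤ (q : ℤ) + 1 := by exact_mod_cast hq1
    have hrp' : (r : ℤ) + 1 ≤ (p : ℤ) := by exact_mod_cast hrp
    have hxy' : (x : ℤ) ≤ y := by exact_mod_cast hxy
    have hy' : (1 : ℤ) ≤ y := by exact_mod_cast hy
    have hp' : (1 : ℤ) ≤ p := by exact_mod_cast hp
    have hq0 : (0 : ℤ) ≤ q := by positivity
    have hx0 : (0 : ℤ) ≤ x := by positivity
    have hr0 : (0 : ℤ) ≤ r := by positivity
    have k1 : ((y : ℤ) - x) * r ≤ ((y : ℤ) - x) * ((p : ℤ) - 1) :=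
      mul_le_mul_of_nonneg_left (by linarith) (by linarith)
    have k3 : (q : ℤ) * B ≤ -q := by
      have := mul_le_mul_of_nonneg_left hB1 hq0
      linarith
    have k4 : (x : ℤ) ≤ x * p := le_mul_of_one_le_right hx0 hp'
    have k5 : ((y : ℤ) - x) * ((p : ℤ) - 1) = y * p - y - x * p + x := by ring
    have k6 : ((y : ℤ) - x) * r ≤ y * p - y - x * p + x := by rw [← k5]; exact k1
    ring_nf at hq1' k6 hup k3 ⊢
    linarith
  
  -- tail-witness predicate
  set D : ℕ → Prop := fun i =>
    ∃ k, i ≤ k ∧ (σ k).2 = true ∧ M ≤ k + p ∧ 0 ≤ balSeg x y φ i k with hD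
  have DtoF : ∀ i, D i → FreqUntil x y σ i := by
    intro i hDi
    simp only [hD] at hDi
    obtain ⟨k, h1, h2, _, h4⟩ := hDi
    exact ⟨k, h1, h2, h4⟩
  have claimA : ∀ i, a ≤ i →
      ((∃ k, i ≤ k ∧ (σ k).2 = true ∧ k + p < M ∧ 0 ≤ balSeg x y φ i k) ↔
        (∃ k, i + p ≤ k ∧ (σ k).2 = true ∧ k < M ∧ 0 ≤ balSeg x y φ (i + p) k)) := by
    intro i hi
    constructor
    · rintro ⟨k, h1, h2, h3, h4⟩
      refine ⟨k + p, by omega, ?_, by omega, ?_⟩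
      · rw [hψper k (le_trans hi h1) h3]; exact h2
      · have hs : balSeg x y φ (i + p) (k + p) = balSeg x y φ i k :=
          balSeg_shift x y p φ (fun j hj1 hj2 => hφper j (le_trans hi hj1) (by omega))
        rw [hs]; exact h4
    · rintro ⟨k, h1, h2, h3, h4⟩
      obtain ⟨j, rfl⟩ : ∃ j, k = j + p := ⟨k - p, by omega⟩
      have hψj : (σ j).2 = true := by rw [← hψper j (by omega) (by omega)]; exact h2
      refine ⟨j, by omega, hψj, by omega, ?_⟩
      have hs : balSeg x y φ (i + p) (j + p) = balSeg x y φ i j :=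
        balSeg_shift x y p φ (fun j' hj1 hj2 => hφper j' (le_trans hi hj1) (by omega))
      rw [← hs]; exact h4
  have E2 : ∀ i, a ≤ i → ¬ D i → ¬ D (i + p) →
      (FreqUntil x y σ i ↔ FreqUntil x y σ (i + p)) := by
    intro i hi hnD hnD'
    constructor
    · rintro ⟨k, h1, h2, h4⟩
      have h4' : 0 ≤ balSeg x y φ i k := h4
      by_cases hk : k + p < M
      · obtain ⟨k', c1, c2, c3, c4⟩ := (claimA i hi).mp ⟨k, h1, h2, hk, h4'⟩
        exact ⟨k', c1, c2, c4⟩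
      · exfalso
        apply hnD
        simp only [hD]
        exact ⟨k, h1, h2, by omega, h4'⟩
    · rintro ⟨k, h1, h2, h4⟩
      have h4' : 0 ≤ balSeg x y φ (i + p) k := h4
      by_cases hk : k < M
      · obtain ⟨k', c1, c2, c3, c4⟩ := (claimA i hi).mpr ⟨k, h1, h2, hk, h4'⟩
        exact ⟨k', c1, c2, c4⟩
      · exfalso
        apply hnD'
        simp only [hD]
        exact ⟨k, h1, h2, by omega, h4'⟩
  have DmonoPos : 1 ≤ B → ∀ i i', D i → a ≤ i' → i' + (p * y - 1) * p ≤ i → i ≤ M → D i' := by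
    intro hB1 i i' hDi hi' hdist hiM
    simp only [hD] at hDi ⊢
    obtain ⟨k, h1, h2, h3, h4⟩ := hDi
    obtain ⟨d, rfl⟩ : ∃ d, i = i' + d := ⟨i - i', by omega⟩
    have hbal : 0 ≤ balSeg x y φ i' (i' + d) := claimB hB1 i' d hi' (by omega) hiM
    have hsp : balSeg x y φ i' k = balSeg x y φ i' (i' + d) + balSeg x y φ (i' + d) k :=
      balSeg_split x y φ (by omega) h1
    exact ⟨k, by omega, h2, h3, by linarith⟩
  have DmonoNeg : B ≤ -1 → ∀ i i'', D i → a ≤ i → i + (p * y - 1) * p ≤ i'' → i'' + p ≤ M →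
      D i'' := by
    intro hB1 i i'' hDi hia hdist hiM
    simp only [hD] at hDi ⊢
    obtain ⟨k, h1, h2, h3, h4⟩ := hDi
    obtain ⟨d, rfl⟩ : ∃ d, i'' = i + d := ⟨i'' - i, by omega⟩
    have hik : i + d ≤ k := by omega
    have hbal : balSeg x y φ i (i + d) ≤ 0 := claimB' hB1 i d hia (by omega) (by omega)
    have hsp : balSeg x y φ i k = balSeg x y φ i (i + d) + balSeg x y φ (i + d) k :=
      balSeg_split x y φ (by omega) hik
    exact ⟨k, hik, h2, h3, by linarith⟩
  have B0case : B = 0 → ∀ i, a ≤ i → i + 2 * p ≤ M →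
      (FreqUntil x y σ i ↔ FreqUntil x y σ (i + p)) := by
    intro hB0 i hi hi2
    have hw : balSeg x y φ i (i + p) = B := window i hi (by omega)
    constructor
    · rintro ⟨k, h1, h2, h4⟩
      have h4' : 0 ≤ balSeg x y φ i k := h4
      by_cases hk : k + p < M
      · obtain ⟨k', c1, c2, c3, c4⟩ := (claimA i hi).mp ⟨k, h1, h2, hk, h4'⟩
        exact ⟨k', c1, c2, c4⟩
      · have hkip : i + p ≤ k := by omega
        have hsp : balSeg x y φ i k = balSeg x y φ i (i + p) + balSeg x y φ (i + p) k :=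
          balSeg_split x y φ (by omega) hkip
        refine ⟨k, hkip, h2, ?_⟩
        show (0 : ℤ) ≤ balSeg x y φ (i + p) k
        rw [hw, hB0] at hsp
        linarith
    · rintro ⟨k, h1, h2, h4⟩
      have h4' : 0 ≤ balSeg x y φ (i + p) k := h4
      have hsp : balSeg x y φ i k = balSeg x y φ i (i + p) + balSeg x y φ (i + p) k :=
        balSeg_split x y φ (by omega) h1
      refine ⟨k, by omega, h2, ?_⟩
      show (0 : ℤ) ≤ balSeg x y φ i k
      rw [hw, hB0] at hsp
      linarith
  -- useful product identities
  have hpyp : (p * y - 1) * p + p = p * y * p := by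
    have h : p * y - 1 + 1 = p * y := by omega
    calc (p * y - 1) * p + p = ((p * y - 1) + 1) * p := by ring
      _ = p * y * p := by rw [h]
  have e6 : (n - p * y) * p + p * y * p = n * p := by
    have h : (n - p * y) + p * y = n := by omega
    calc (n - p * y) * p + p * y * p = ((n - p * y) + p * y) * p := by ring
      _ = n * p := by rw [h]
  rcases lt_trichotomy B 0 with hBneg | hB0 | hBpos
  · -- B ≤ -1
    have hBneg' : B ≤ -1 := by omega
    by_cases hex : ∃ j, a ≤ j ∧ j + p ≤ M ∧ D j
    · set js := Nat.find hex with hjs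
      obtain ⟨hja, hjM, hjD⟩ := Nat.find_spec hex
      have hmin : ∀ j', j' < js → a ≤ j' → j' + p ≤ M → ¬ D j' := by
        intro j' h1 h2 h3 hc
        exact Nat.find_min hex (hjs ▸ h1) ⟨h2, h3, hc⟩
      set n1 := min ((js - a) / p) (n - p * y) with hn1
      have hn1le : n1 ≤ n - p * y := min_le_right _ _
      have hjlb : a + n1 * p ≤ js := by
        have h1 : n1 ≤ (js - a) / p := min_le_left _ _
        have h2 : n1 * p ≤ (js - a) / p * p := Nat.mul_le_mul_right p h1
        have h3 : (js - a) / p * p ≤ js - a := Nat.div_mul_le_self _ _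
        omega
      refine ⟨n1, n - p * y - n1, by omega, ?_⟩
      intro i hi
      rcases hi with ⟨hi1, hi2⟩ | ⟨hi1, hi2⟩
      · rcases Nat.eq_zero_or_pos n1 with h0 | h0
        · rw [h0] at hi2; simp at hi2; omega
        · have e1 : (n1 - 1) * p + p = n1 * p := by
            have h : n1 - 1 + 1 = n1 := by omega
            calc (n1 - 1) * p + p = ((n1 - 1) + 1) * p := by ring
              _ = n1 * p := by rw [h]
          have hip : i + p < a + n1 * p := by omega
          have hnDi : ¬ D i := hmin i (by omega) hi1 (by omega)
          have hnDip : ¬ D (i + p) := hmin (i + p) (by omega) (by omega) (by omega)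
          exact E2 i hi1 hnDi hnDip
      · have e2 : (n1 + p * y) * p = n1 * p + p * y * p := by ring
        rw [e2] at hi1
        by_cases hn2 : 2 ≤ n - p * y - n1
        · have e3 : n1 + p * y + (n - p * y - n1 - 2) = n - 2 := by omega
          rw [e3] at hi2
          have e4 : (n - 2) * p + 2 * p = n * p := by
            have h : n - 2 + 2 = n := by omega
            calc (n - 2) * p + 2 * p = ((n - 2) + 2) * p := by ring
              _ = n * p := by rw [h]
          have hi2M : i + 2 * p + 1 ≤ M := by omega
          rcases le_or_gt ((js - a) / p) (n - p * y) with hmc | hmc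
          · have hn1eq : n1 = (js - a) / p := by rw [hn1]; exact min_eq_left hmc
            have hjub' : js - a < (js - a) / p * p + p := by
              have h1 := Nat.div_add_mod (js - a) p
              have h3 : p * ((js - a) / p) = (js - a) / p * p := Nat.mul_comm _ _
              have h2 : (js - a) % p < p := Nat.mod_lt _ hp
              omega
            have hjub : js < a + n1 * p + p := by rw [hn1eq]; omega
            have hDi : D i := DmonoNeg hBneg' js i hjD hja (by omega) (by omega)
            have hDip : D (i + p) := DmonoNeg hBneg' js (i + p) hjD hja (by omega) (by omega)
            exact iff_of_true (DtoF i hDi) (DtoF (i + p) hDip)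
          · have hn1eq : n1 = n - p * y := by rw [hn1]; exact min_eq_right (le_of_lt hmc)
            exfalso; omega
        · have e3 : n1 + p * y + (n - p * y - n1 - 2) = n1 + p * y := by omega
          rw [e3, e2] at hi2
          exact absurd hi2 (by omega)
    · push_neg at hex
      refine ⟨n - p * y, 0, by omega, ?_⟩
      intro i hi
      rcases hi with ⟨hi1, hi2⟩ | ⟨hi1, hi2⟩
      · have e1 : (n - p * y - 1) * p + p = (n - p * y) * p := by
          have h : n - p * y - 1 + 1 = n - p * y := by omega
          calc (n - p * y - 1) * p + p = ((n - p * y - 1) + 1) * p := by ring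
            _ = (n - p * y) * p := by rw [h]
        have hnDi : ¬ D i := hex i hi1 (by omega)
        have hnDip : ¬ D (i + p) := hex (i + p) (by omega) (by omega)
        exact E2 i hi1 hnDi hnDip
      · simp only [Nat.zero_sub, Nat.add_zero] at hi2
        exact absurd hi2 (by omega)
  · -- B = 0
    refine ⟨n - p * y, 0, by omega, ?_⟩
    intro i hi
    rcases hi with ⟨hi1, hi2⟩ | ⟨hi1, hi2⟩
    · have e1 : (n - p * y - 1) * p + p = (n - p * y) * p := by
        have h : n - p * y - 1 + 1 = n - p * y := by omega
        calc (n - p * y - 1) * p + p = ((n - p * y - 1) + 1) * p := by ring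
          _ = (n - p * y) * p := by rw [h]
      exact B0case hB0 i hi1 (by omega)
    · simp only [Nat.zero_sub, Nat.add_zero] at hi2
      exact absurd hi2 (by omega)
  · -- B ≥ 1
    have hBpos' : (1 : ℤ) ≤ B := by omega
    by_cases hex : ∃ j, a ≤ j ∧ j ≤ M ∧ ¬ D j
    · set js := Nat.find hex with hjs
      obtain ⟨hja, hjM, hjD⟩ := Nat.find_spec hex
      have hmin : ∀ j', j' < js → a ≤ j' → j' ≤ M → D j' := by
        intro j' h1 h2 h3
        by_contra hc
        exact Nat.find_min hex (hjs ▸ h1) ⟨h2, h3, hc⟩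
      set n1 := min ((js - a) / p) (n - p * y) with hn1
      have hn1le : n1 ≤ n - p * y := min_le_right _ _
      have hjlb : a + n1 * p ≤ js := by
        have h1 : n1 ≤ (js - a) / p := min_le_left _ _
        have h2 : n1 * p ≤ (js - a) / p * p := Nat.mul_le_mul_right p h1
        have h3 : (js - a) / p * p ≤ js - a := Nat.div_mul_le_self _ _
        omega
      refine ⟨n1, n - p * y - n1, by omega, ?_⟩
      intro i hi
      rcases hi with ⟨hi1, hi2⟩ | ⟨hi1, hi2⟩
      · rcases Nat.eq_zero_or_pos n1 with h0 | h0
        · rw [h0] at hi2; simp at hi2; omega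
        · have e1 : (n1 - 1) * p + p = n1 * p := by
            have h : n1 - 1 + 1 = n1 := by omega
            calc (n1 - 1) * p + p = ((n1 - 1) + 1) * p := by ring
              _ = n1 * p := by rw [h]
          have hip : i + p < a + n1 * p := by omega
          have hDi : D i := hmin i (by omega) hi1 (by omega)
          have hDip : D (i + p) := hmin (i + p) (by omega) (by omega) (by omega)
          exact iff_of_true (DtoF i hDi) (DtoF (i + p) hDip)
      · have e2 : (n1 + p * y) * p = n1 * p + p * y * p := by ring
        rw [e2] at hi1
        by_cases hn2 : 2 ≤ n - p * y - n1
        · have e3 : n1 + p * y + (n - p * y - n1 - 2) = n - 2 := by omega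
          rw [e3] at hi2
          have e4 : (n - 2) * p + 2 * p = n * p := by
            have h : n - 2 + 2 = n := by omega
            calc (n - 2) * p + 2 * p = ((n - 2) + 2) * p := by ring
              _ = n * p := by rw [h]
          have hi2M : i + 2 * p + 1 ≤ M := by omega
          rcases le_or_gt ((js - a) / p) (n - p * y) with hmc | hmc
          · have hn1eq : n1 = (js - a) / p := by rw [hn1]; exact min_eq_left hmc
            have hjub' : js - a < (js - a) / p * p + p := by
              have h1 := Nat.div_add_mod (js - a) p
              have h3 : p * ((js - a) / p) = (js - a) / p * p := Nat.mul_comm _ _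
              have h2 : (js - a) % p < p := Nat.mod_lt _ hp
              omega
            have hjub : js < a + n1 * p + p := by rw [hn1eq]; omega
            have hnDi : ¬ D i := fun hDi =>
              hjD (DmonoPos hBpos' i js hDi hja (by omega) (by omega))
            have hnDip : ¬ D (i + p) := fun hDip =>
              hjD (DmonoPos hBpos' (i + p) js hDip hja (by omega) (by omega))
            exact E2 i (by omega) hnDi hnDip
          · have hn1eq : n1 = n - p * y := by rw [hn1]; exact min_eq_right (le_of_lt hmc)
            exfalso; omega
        · have e3 : n1 + p * y + (n - p * y - n1 - 2) = n1 + p * y := by omega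
          rw [e3, e2] at hi2
          exact absurd hi2 (by omega)
    · push_neg at hex
      refine ⟨n - p * y, 0, by omega, ?_⟩
      intro i hi
      rcases hi with ⟨hi1, hi2⟩ | ⟨hi1, hi2⟩
      · have e1 : (n - p * y - 1) * p + p = (n - p * y) * p := by
          have h : n - p * y - 1 + 1 = n - p * y := by omega
          calc (n - p * y - 1) * p + p = ((n - p * y - 1) + 1) * p := by ring
            _ = (n - p * y) * p := by rw [h]
        have hDi : D i := hex i hi1 (by omega)
        have hDip : D (i + p) := hex (i + p) (by omega) (by omega)
        exact iff_of_true (DtoF i hDi) (DtoF (i + p) hDip)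
      · simp only [Nat.zero_sub, Nat.add_zero] at hi2
        exact absurd hi2 (by omega)
end
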